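/- Let w ∈ {+,0,-}^{3n} be a lattice word with n of each letter (every prefix has #(+) ≥ #(0) ≥ #(-)). Then for any lattice word w ≠ +^n 0^n -^n, there exist positions a < b with w_a < w_b such that swapping them yields a lattice word. -/

import Mathlib

/-- Swap the entries of `w` at positions `a` and `b`. -/
def swapWord {N : ℕ} (w : Fin N → Fin 3) (a b : Fin N) : Fin N → Fin 3 :=
  Function.update (Function.update w a (w b)) b (w a)

/-- Number of occurrences of the letter `ℓ` among the first `k` letters of `w`
(over the alphabet `{-,0,+}` encoded as `Fin 3` with `- = 0 < 0 = 1 < + = 2`). -/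
def pcount {n : ℕ} (w : Fin (3 * n) → Fin 3) (k : ℕ) (ℓ : Fin 3) : ℕ :=
  (Finset.univ.filter (fun i : Fin (3 * n) => i.val < k ∧ w i = ℓ)).card

/-- Lattice condition: every prefix has `#(+) ≥ #(0) ≥ #(-)`. -/
def IsLatticeWord {n : ℕ} (w : Fin (3 * n) → Fin 3) : Prop :=
  ∀ k : ℕ, pcount w k 1 ≤ pcount w k 2 ∧ pcount w k 0 ≤ pcount w k 1

/-- The word `+^n 0^n -^n`: all `n` `+`'s first, then all `n` `0`'s, then all
`n` `-`'s. -/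
def maxWord (n : ℕ) : Fin (3 * n) → Fin 3 :=
  fun i => if i.val < n then 2 else if i.val < 2 * n then 1 else 0

lemma pcount_congr {n : ℕ} {v w : Fin (3 * n) → Fin 3} {k : ℕ} (ℓ : Fin 3)
    (h : ∀ j : Fin (3 * n), j.val < k → v j = w j) : pcount v k ℓ = pcount w k ℓ := by
  unfold pcount
  congr 1
  apply Finset.filter_congr
  intro j _
  constructor
  · rintro ⟨h1, h2⟩; exact ⟨h1, (h j h1) ▸ h2⟩
  · rintro ⟨h1, h2⟩; exact ⟨h1, (h j h1).symm ▸ h2⟩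

lemma pcount_succ {n : ℕ} (w : Fin (3 * n) → Fin 3) (i : Fin (3 * n)) (ℓ : Fin 3) :
    pcount w (i.val + 1) ℓ = pcount w i.val ℓ + if w i = ℓ then 1 else 0 := by
  unfold pcount
  have hsplit : (Finset.univ.filter (fun j : Fin (3 * n) => j.val < i.val + 1 ∧ w j = ℓ))
      = (Finset.univ.filter (fun j : Fin (3 * n) => j.val < i.val ∧ w j = ℓ))
        ∪ (Finset.univ.filter (fun j : Fin (3 * n) => j = i ∧ w j = ℓ)) := by
    ext j
    simp only [Finset.mem_filter, Finset.mem_union, Finset.mem_univ, true_and]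
    constructor
    · rintro ⟨h1, h2⟩
      rcases Nat.lt_succ_iff_lt_or_eq.mp h1 with h | h
      · exact Or.inl ⟨h, h2⟩
      · exact Or.inr ⟨Fin.ext h, h2⟩
    · rintro (⟨h1, h2⟩ | ⟨h1, h2⟩)
      · exact ⟨Nat.lt_succ_of_lt h1, h2⟩
      · exact ⟨by rw [h1]; exact Nat.lt_succ_self _, h2⟩
  rw [hsplit, Finset.card_union_of_disjoint]
  · congr 1
    split_ifs with h
    · rw [show (Finset.univ.filter (fun j : Fin (3 * n) => j = i ∧ w j = ℓ)) = {i} from ?_]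
      · exact Finset.card_singleton i
      · ext j
        simp only [Finset.mem_filter, Finset.mem_univ, true_and, Finset.mem_singleton]
        constructor
        · rintro ⟨h1, _⟩; exact h1
        · rintro rfl; exact ⟨rfl, h⟩
    · rw [show (Finset.univ.filter (fun j : Fin (3 * n) => j = i ∧ w j = ℓ)) = ∅ from ?_]
      · rfl
      · ext j
        simp only [Finset.mem_filter, Finset.mem_univ, true_and, Finset.notMem_empty, iff_false]
        rintro ⟨rfl, h2⟩; exact h h2
  · rw [Finset.disjoint_left]
    rintro j hj hj2
    simp only [Finset.mem_filter] at hj hj2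
    obtain ⟨-, h1, -⟩ := hj
    obtain ⟨-, rfl, -⟩ := hj2
    exact absurd h1 (lt_irrefl _)

lemma swapWord_apply {N : ℕ} (w : Fin N → Fin 3) (a b i : Fin N) :
    swapWord w a b i = w (Equiv.swap a b i) := by
  unfold swapWord
  rcases eq_or_ne i b with rfl | hib
  · simp [Equiv.swap_apply_right]
  · rcases eq_or_ne i a with rfl | hia
    · rw [Function.update_of_ne hib, Function.update_self, Equiv.swap_apply_left]
    · rw [Function.update_of_ne hib, Function.update_of_ne hia,
        Equiv.swap_apply_of_ne_of_ne hia hib]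

lemma pcount_swap_high {n : ℕ} (w : Fin (3 * n) → Fin 3) (a b : Fin (3 * n)) {k : ℕ}
    (ha : a.val < k) (hb : b.val < k) (ℓ : Fin 3) :
    pcount (swapWord w a b) k ℓ = pcount w k ℓ := by
  unfold pcount
  apply Finset.card_bij' (fun i _ => Equiv.swap a b i) (fun i _ => Equiv.swap a b i)
  · intro i hi
    simp only [Finset.mem_filter, Finset.mem_univ, true_and] at hi ⊢
    refine ⟨?_, ?_⟩
    · rcases eq_or_ne i a with rfl | hia
      · rw [Equiv.swap_apply_left]; exact hb
      · rcases eq_or_ne i b with rfl | hib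
        · rw [Equiv.swap_apply_right]; exact ha
        · rw [Equiv.swap_apply_of_ne_of_ne hia hib]; exact hi.1
    · rw [swapWord_apply] at hi; exact hi.2
  · intro i hi
    simp only [Finset.mem_filter, Finset.mem_univ, true_and] at hi ⊢
    rw [swapWord_apply, Equiv.swap_apply_self]
    refine ⟨?_, hi.2⟩
    rcases eq_or_ne i a with rfl | hia
    · rw [Equiv.swap_apply_left]; exact hb
    · rcases eq_or_ne i b with rfl | hib
      · rw [Equiv.swap_apply_right]; exact ha
      · rw [Equiv.swap_apply_of_ne_of_ne hia hib]; exact hi.1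
  · intro i _; exact Equiv.swap_apply_self a b i
  · intro i _; exact Equiv.swap_apply_self a b i

/-- If `w` is weakly decreasing with `n` of each letter, it is `maxWord n`. -/
lemma eq_maxWord_of_antitone {n : ℕ} (w : Fin (3 * n) → Fin 3)
    (hc : ∀ ℓ : Fin 3, (Finset.univ.filter (fun i => w i = ℓ)).card = n)
    (hdec : ∀ (i j : Fin (3 * n)), i ≤ j → w j ≤ w i) : w = maxWord n := by
  have h2 : ∀ i : Fin (3 * n), i.val < n → w i = 2 := by
    intro i hi
    by_contra h
    have hle : ∀ j : Fin (3 * n), i ≤ j → w j ≠ 2 := by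
      intro j hj h2
      have := hdec i j hj
      rw [h2] at this
      exact h (le_antisymm (by omega) this)
    have hsub : (Finset.univ.filter (fun j => w j = 2)) ⊆ Finset.Iio i := by
      intro j hj
      simp only [Finset.mem_filter, Finset.mem_univ, true_and] at hj
      simp only [Finset.mem_Iio]
      by_contra hji
      exact hle j (le_of_not_gt hji) hj
    have := Finset.card_le_card hsub
    rw [hc 2, Fin.card_Iio] at this
    omega
  have h0 : ∀ i : Fin (3 * n), 2 * n ≤ i.val → w i = 0 := by
    intro i hi
    by_contra h
    have hge : ∀ j : Fin (3 * n), j ≤ i → w j ≠ 0 := by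
      intro j hj h0
      have := hdec j i hj
      rw [h0] at this
      exact h (le_antisymm this (by omega))
    have hsub : (Finset.univ.filter (fun j => w j = 0)) ⊆ Finset.Ioi i := by
      intro j hj
      simp only [Finset.mem_filter, Finset.mem_univ, true_and] at hj
      simp only [Finset.mem_Ioi]
      by_contra hji
      exact hge j (le_of_not_gt hji) hj
    have := Finset.card_le_card hsub
    rw [hc 0, Fin.card_Ioi] at this
    have := i.isLt
    omega
  funext i
  unfold maxWord
  split_ifs with hn h2n
  · exact h2 i hn
  · -- n ≤ i.val < 2 * n : show w i = 1
    have hne2 : w i ≠ 2 := by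
      intro h
      have : Finset.Iic i ⊆ (Finset.univ.filter (fun j => w j = 2)) := by
        intro j hj
        simp only [Finset.mem_Iic] at hj
        simp only [Finset.mem_filter, Finset.mem_univ, true_and]
        have := hdec j i hj
        rw [h] at this
        exact le_antisymm (by omega) this
      have := Finset.card_le_card this
      rw [hc 2, Fin.card_Iic] at this
      omega
    have hne0 : w i ≠ 0 := by
      intro h
      have : Finset.Ici i ⊆ (Finset.univ.filter (fun j => w j = 0)) := by
        intro j hj
        simp only [Finset.mem_Ici] at hj
        simp only [Finset.mem_filter, Finset.mem_univ, true_and]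
        have := hdec i j hj
        rw [h] at this
        exact le_antisymm this (by omega)
      have := Finset.card_le_card this
      rw [hc 0, Fin.card_Ici] at this
      have := i.isLt
      omega
    have hv := (w i).isLt
    have hv2 : (w i).val ≠ 2 := fun hh => hne2 (Fin.ext hh)
    have hv0 : (w i).val ≠ 0 := fun hh => hne0 (Fin.ext hh)
    exact Fin.ext (by omega)
  · exact h0 i (by omega)

/-- `+^n 0^n -^n` is the unique maximal lattice word: any lattice word `w` with
`n` of each letter other than `+^n 0^n -^n` admits positions `a < b` with
`w a < w b` whose swap is again a lattice word. -/
theorem stmt18 (n : ℕ) (w : Fin (3 * n) → Fin 3)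
    (hl : IsLatticeWord w)
    (hc : ∀ ℓ : Fin 3, (Finset.univ.filter (fun i => w i = ℓ)).card = n)
    (hne : w ≠ maxWord n) :
    ∃ a b : Fin (3 * n), a < b ∧ w a < w b ∧ IsLatticeWord (swapWord w a b) := by
  by_cases hasc : ∃ i : Fin (3 * n), ∃ h : i.val + 1 < 3 * n, w i < w ⟨i.val + 1, h⟩
  · obtain ⟨a, hb1, hlt⟩ := hasc
    set b : Fin (3 * n) := ⟨a.val + 1, hb1⟩ with hbdef
    refine ⟨a, b, by simp [Fin.lt_def, hbdef], hlt, ?_⟩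
    have hab : a ≠ b := by
      intro h
      have : a.val = b.val := by rw [h]
      simp [hbdef] at this
    intro k
    have hbv : b.val = a.val + 1 := rfl
    rcases show k ≤ a.val ∨ k = a.val + 1 ∨ a.val + 1 < k by omega with hk | hk | hk
    · have he : ∀ ℓ, pcount (swapWord w a b) k ℓ = pcount w k ℓ := by
        intro ℓ
        apply pcount_congr
        intro j hj
        rw [swapWord_apply, Equiv.swap_apply_of_ne_of_ne]
        · intro h; rw [h] at hj; omega
        · intro h; rw [h] at hj; rw [hbv] at hj; omega
      rw [he 0, he 1, he 2]
      exact hl k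
    · -- the interesting prefix
      subst hk
      have hva : swapWord w a b a = w b := by
        rw [swapWord_apply, Equiv.swap_apply_left]
      have e3 : ∀ ℓ, pcount (swapWord w a b) (a.val + 1) ℓ
          = pcount w a.val ℓ + if w b = ℓ then 1 else 0 := by
        intro ℓ
        rw [pcount_succ (swapWord w a b) a ℓ, hva]
        congr 1
        apply pcount_congr
        intro j hj
        rw [swapWord_apply, Equiv.swap_apply_of_ne_of_ne]
        · intro h; rw [h] at hj; omega
        · intro h; rw [h] at hj; rw [hbv] at hj; omega
      have e1 : ∀ ℓ, pcount w (a.val + 1) ℓ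
          = pcount w a.val ℓ + if w a = ℓ then 1 else 0 := fun ℓ => pcount_succ w a ℓ
      have e2 : ∀ ℓ, pcount w (a.val + 2) ℓ
          = pcount w (a.val + 1) ℓ + if w b = ℓ then 1 else 0 := by
        intro ℓ
        have := pcount_succ w b ℓ
        rw [hbv] at this
        exact this
      have l1 := hl a.val
      have l2 := hl (a.val + 2)
      rw [e3 0, e3 1, e3 2]
      have hvlt : (w a).val < (w b).val := hlt
      have ha3 := (w a).isLt
      have hb3 := (w b).isLt
      have hcases : ((w a).val = 0 ∧ (w b).val = 1) ∨ ((w a).val = 0 ∧ (w b).val = 2)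
          ∨ ((w a).val = 1 ∧ (w b).val = 2) := by omega
      rcases hcases with ⟨h1, h2⟩ | ⟨h1, h2⟩ | ⟨h1, h2⟩
      · have hwa : w a = 0 := Fin.ext h1
        have hwb : w b = 1 := Fin.ext h2
        have e20 := e2 0; have e21 := e2 1; have e22 := e2 2
        have e10 := e1 0; have e11 := e1 1; have e12 := e1 2
        rw [hwb] at e20 e21 e22
        rw [hwa] at e10 e11 e12
        simp only [show ((0:Fin 3) = 0) = True from by simp,
          show ((0:Fin 3) = 1) = False from by simp, show ((0:Fin 3) = 2) = False from by simp,
          show ((1:Fin 3) = 0) = False from by simp, show ((1:Fin 3) = 1) = True from by simp,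
          show ((1:Fin 3) = 2) = False from by simp, if_true, if_false] at e20 e21 e22 e10 e11 e12
        rw [hwb]
        simp only [show ((1:Fin 3) = 0) = False from by simp,
          show ((1:Fin 3) = 1) = True from by simp,
          show ((1:Fin 3) = 2) = False from by simp, if_true, if_false]
        omega
      · have hwa : w a = 0 := Fin.ext h1
        have hwb : w b = 2 := Fin.ext h2
        rw [hwb]
        simp only [show ((2:Fin 3) = 0) = False from by simp,
          show ((2:Fin 3) = 1) = False from by simp,
          show ((2:Fin 3) = 2) = True from by simp, if_true, if_false]
        omega
      · have hwa : w a = 1 := Fin.ext h1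
        have hwb : w b = 2 := Fin.ext h2
        have e10 := e1 0; have e11 := e1 1; have e12 := e1 2
        rw [hwa] at e10 e11 e12
        simp only [show ((1:Fin 3) = 0) = False from by simp,
          show ((1:Fin 3) = 1) = True from by simp,
          show ((1:Fin 3) = 2) = False from by simp, if_true, if_false] at e10 e11 e12
        have l1' := hl (a.val + 1)
        rw [hwb]
        simp only [show ((2:Fin 3) = 0) = False from by simp,
          show ((2:Fin 3) = 1) = False from by simp,
          show ((2:Fin 3) = 2) = True from by simp, if_true, if_false]
        omega
    · have he : ∀ ℓ, pcount (swapWord w a b) k ℓ = pcount w k ℓ := by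
        intro ℓ
        exact pcount_swap_high w a b (by omega) (by rw [hbv]; omega) ℓ
      rw [he 0, he 1, he 2]
      exact hl k
  · exfalso
    apply hne
    push_neg at hasc
    apply eq_maxWord_of_antitone w hc
    intro i j hij
    have hij' : i.val ≤ j.val := hij
    obtain ⟨d, hd⟩ : ∃ d, j.val = i.val + d := ⟨j.val - i.val, by omega⟩
    clear hij hij'
    induction d generalizing j with
    | zero =>
        have : j = i := Fin.ext (by omega)
        rw [this]
    | succ d ih =>
        have hlt' : i.val + d < 3 * n := by have := j.isLt; omega
        have step := hasc ⟨i.val + d, hlt'⟩ (by have := j.isLt; simpa using by omega)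
        have hj : j = ⟨i.val + d + 1, by have := j.isLt; omega⟩ := Fin.ext (by show j.val = i.val + d + 1; omega)
        calc w j ≤ w ⟨i.val + d, hlt'⟩ := by rw [hj]; exact step
          _ ≤ w i := ih ⟨i.val + d, hlt'⟩ rfl
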